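/- Let G be a centerless group and A ⊆ G such that (G, A) is a special pair, and let ⟨G^α⟩ be the automorphism tower of G. Then for every ordinal α, (G^α, A) is a special pair, and the centralizer of A in G^α is trivial: C_{G^α}(A) = {e}. -/

import Mathlib

universe u

/-- The automorphism tower of a centerless group `G`: an ordinal-indexed increasing
continuous chain of groups, starting at `G`, where each successor stage is (identified
with) the automorphism group of the previous stage via the conjugation embedding. -/
structure AutTower (G : Type u) [Group G] where
  /-- the `o`-th stage `G^o` of the tower -/
  Stage : Ordinal.{u} → GrpCat.{u}
  /-- the inclusion maps of the tower -/
  map : ∀ ⦃o₁ o₂ : Ordinal.{u}⦄, o₁ ≤ o₂ → (↥(Stage o₁) →* ↥(Stage o₂))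
  map_id : ∀ (o : Ordinal.{u}) (x : ↥(Stage o)), map le_rfl x = x
  map_comp : ∀ ⦃o₁ o₂ o₃ : Ordinal.{u}⦄ (h₁ : o₁ ≤ o₂) (h₂ : o₂ ≤ o₃) (x : ↥(Stage o₁)),
      map h₂ (map h₁ x) = map (h₁.trans h₂) x
  map_injective : ∀ ⦃o₁ o₂ : Ordinal.{u}⦄ (h : o₁ ≤ o₂), Function.Injective (map h)
  /-- the identification of `G` with the `0`-th stage -/
  emb0 : G ≃* ↥(Stage 0)
  /-- the identification of the `(o+1)`-st stage with `Aut(G^o)` -/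
  succIso : ∀ o : Ordinal.{u}, ↥(Stage (o + 1)) ≃* MulAut ↥(Stage o)
  /-- under the above identification, the inclusion `G^o ≤ G^{o+1}` is `g ↦` conjugation by `g` -/
  succIso_map : ∀ (o : Ordinal.{u}) (x : ↥(Stage o)),
      succIso o (map (le_self_add (a := o) (b := 1)) x) = MulAut.conj x
  /-- at limit stages the tower is continuous: `G^δ = ⋃_{α<δ} G^α` -/
  limit_covers : ∀ (o : Ordinal.{u}), Order.IsSuccLimit o → ∀ x : ↥(Stage o),
      ∃ (o' : Ordinal.{u}) (h : o' < o), x ∈ Set.range (map h.le)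

namespace AutTower

variable {G : Type u} [Group G]

/-- the embedding of `G` into the `o`-th stage of its automorphism tower -/
def embed (T : AutTower G) (o : Ordinal.{u}) : G →* ↥(T.Stage o) :=
  (T.map (zero_le (a := o))).comp T.emb0.toMonoidHom

/-- `G^{o+1} = G^o`, i.e. the inclusion of stage `o` into stage `o+1` is onto -/
def StabilizesAt (T : AutTower G) (o : Ordinal.{u}) : Prop :=
  Function.Surjective (T.map (le_self_add (a := o) (b := 1)))

end AutTower

section SpecialPair

variable {H : Type u} [Group H]

/-- There is a group isomorphism from `⟨A ∪ {x}⟩` onto `⟨A ∪ {y}⟩` fixing `A`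
pointwise and sending `x` to `y`. -/
def FixesAndSends (A : Set H) (x y : H) : Prop :=
  ∃ φ : ↥(Subgroup.closure (A ∪ {x})) ≃* ↥(Subgroup.closure (A ∪ {y})),
    (∀ g : ↥(Subgroup.closure (A ∪ {x})), (g : H) ∈ A → ((φ g : H) = (g : H))) ∧
    (∀ g : ↥(Subgroup.closure (A ∪ {x})), (g : H) = x → ((φ g : H) = y))

end SpecialPair

/-- `(G, A)` is a special pair: whenever there is an isomorphism from `⟨A ∪ {x}⟩`
onto `⟨A ∪ {y}⟩` fixing `A` pointwise and sending `x` to `y`, then `x = y`. -/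
def IsSpecialPair (H : Type u) [Group H] (A : Set H) : Prop :=
  ∀ x y : H, FixesAndSends A x y → x = y

/-! An automorphism of a special pair `(K, A)` fixing `A` pointwise is trivial: it restricts to an
isomorphism `⟨A, x⟩ ≅ ⟨A, Φ x⟩` fixing `A`. For inner automorphisms this gives `C_K(A) ≤ Z(K)`.
In the successor step, an isomorphism `⟨conj A, X⟩ ≅ ⟨conj A, Y⟩` fixing `conj A` with `X ↦ Y`
maps `X * conj b * X⁻¹ = conj (X b)` to `conj (Y b)`; pulled back along the injection `conj`,
this gives `X b = Y b` for `b ∈ A`, so `Y⁻¹ * X` fixes `A` and is trivial. At a limit stage any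
two elements already lie in an earlier stage, and such isomorphisms pull back along injective
homomorphisms. -/

open Subgroup Function

section SpecialPair

variable {H K : Type u} [Group H] [Group K]

theorem FixesAndSends.of_injective {A : Set K} {u v : K} (f : closure (A ∪ {u}) →* K)
    (hf : Injective f) (hA : ∀ g : closure (A ∪ {u}), (g : K) ∈ A → f g = g)
    (hu : ∀ g : closure (A ∪ {u}), (g : K) = u → f g = v) :
    FixesAndSends A u v := by
  have hgen : f '' (((↑) : closure (A ∪ {u}) → K) ⁻¹' (A ∪ {u})) = A ∪ {v} := by
    ext k
    constructor
    · rintro ⟨g, hg | hg, rfl⟩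
      · exact Or.inl (by rwa [hA g hg])
      · exact Or.inr (hu g hg)
    · rintro (hk | rfl)
      · exact ⟨⟨k, subset_closure (Or.inl hk)⟩, Or.inl hk, hA _ hk⟩
      · exact ⟨⟨u, subset_closure (Or.inr rfl)⟩, Or.inr rfl, hu _ rfl⟩
  have hrange : f.range = closure (A ∪ {v}) := by
    rw [MonoidHom.range_eq_map, ← closure_closure_coe_preimage (k := A ∪ {u}),
      MonoidHom.map_closure, hgen]
  exact ⟨(MonoidHom.ofInjective hf).trans (MulEquiv.subgroupCongr hrange), hA, hu⟩

theorem FixesAndSends.of_image {f : H →* K} (hf : Injective f) {A : Set H} {x y : H}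
    (h : FixesAndSends (f '' A) (f x) (f y)) : FixesAndSends A x y := by
  obtain ⟨φ, hφA, hφx⟩ := h
  have hmap : ∀ z, (closure (A ∪ {z})).map f = closure (f '' A ∪ {f z}) := fun z => by
    rw [MonoidHom.map_closure, Set.image_union, Set.image_singleton]
  let ι : ∀ z, closure (A ∪ {z}) ≃* closure (f '' A ∪ {f z}) := fun z =>
    ((closure (A ∪ {z})).equivMapOfInjective f hf).trans (MulEquiv.subgroupCongr (hmap z))
  have hι : ∀ z s, (ι z s : K) = f s := fun _ _ => rfl
  have hι_symm : ∀ z t, f ((ι z).symm t) = t := fun z t => by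
    rw [← hι, MulEquiv.apply_symm_apply]
  refine ⟨(ι x).trans (φ.trans (ι y).symm), fun s hs => hf ?_, fun s hs => hf ?_⟩
  · rw [MulEquiv.trans_apply, MulEquiv.trans_apply, hι_symm,
      hφA _ (by rw [hι]; exact ⟨s, hs, rfl⟩), hι]
  · rw [MulEquiv.trans_apply, MulEquiv.trans_apply, hι_symm, hφx _ (by rw [hι, hs])]

theorem FixesAndSends.conj {A : Set K} {x y : K} (h : FixesAndSends A x y) {b : K} (hb : b ∈ A) :
    FixesAndSends A (x * b * x⁻¹) (y * b * y⁻¹) := by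
  obtain ⟨φ, hφA, hφx⟩ := h
  have hx : x ∈ closure (A ∪ {x}) := subset_closure (Or.inr rfl)
  have hb' : b ∈ closure (A ∪ {x}) := subset_closure (Or.inl hb)
  let w : closure (A ∪ {x}) := ⟨x, hx⟩ * ⟨b, hb'⟩ * ⟨x, hx⟩⁻¹
  have hφw : (φ w : K) = y * b * y⁻¹ := by
    simp only [w, map_mul, map_inv, coe_mul, coe_inv, hφx ⟨x, hx⟩ rfl, hφA ⟨b, hb'⟩ hb]
  have hle : closure (A ∪ {x * b * x⁻¹}) ≤ closure (A ∪ {x}) :=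
    (closure_le _).2 (Set.union_subset (Set.subset_union_left.trans subset_closure)
      (Set.singleton_subset_iff.2 w.2))
  refine .of_injective ((closure (A ∪ {y})).subtype.comp (φ.toMonoidHom.comp (inclusion hle)))
    (Subtype.val_injective.comp (φ.injective.comp (inclusion_injective hle)))
    (fun s hs => hφA (inclusion hle s) hs) (fun s hs => ?_)
  show (φ (inclusion hle s) : K) = _
  rw [show inclusion hle s = w from Subtype.ext hs, hφw]

theorem IsSpecialPair.mulAut_eq_one {A : Set K} (hA : IsSpecialPair K A) {Φ : MulAut K}
    (hΦ : ∀ a ∈ A, Φ a = a) : Φ = 1 := by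
  ext g
  refine (hA g (Φ g) (.of_injective (Φ.toMonoidHom.comp (closure (A ∪ {g})).subtype)
    (Φ.injective.comp Subtype.val_injective) (fun s hs => hΦ s hs) fun s hs => ?_)).symm
  simp [hs]

theorem MulAut.conj_eq_one_iff {c : K} : MulAut.conj c = 1 ↔ c ∈ center K := by
  simp only [MulEquiv.ext_iff, MulAut.conj_apply, MulAut.one_apply, mul_inv_eq_iff_eq_mul,
    mem_center_iff]
  exact forall_congr' fun _ => eq_comm

theorem MulAut.conj_injective (hZ : center K = ⊥) : Injective (MulAut.conj : K →* MulAut K) :=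
  (injective_iff_map_eq_one _).2 fun c hc => by simpa [hZ] using MulAut.conj_eq_one_iff.1 hc

theorem MulAut.mul_conj_mul_inv (X : MulAut K) (b : K) :
    X * MulAut.conj b * X⁻¹ = MulAut.conj (X b) := by
  ext g
  simp [MulAut.mul_apply, MulAut.inv_def]

theorem IsSpecialPair.centralizer_eq_bot {A : Set K} (hA : IsSpecialPair K A)
    (hZ : center K = ⊥) : centralizer A = ⊥ := by
  refine eq_bot_iff.2 fun c hc => ?_
  have : MulAut.conj c = 1 := hA.mulAut_eq_one fun a ha => by
    rw [MulAut.conj_apply, ← mem_centralizer_iff.1 hc a ha, mul_inv_cancel_right]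
  rw [← hZ]
  exact MulAut.conj_eq_one_iff.1 this

theorem IsSpecialPair.mulAut_conj_image {A : Set K} (hA : IsSpecialPair K A)
    (hZ : center K = ⊥) : IsSpecialPair (MulAut K) (MulAut.conj '' A) := by
  intro X Y h
  have hXY : ∀ b ∈ A, X b = Y b := fun b hb =>
    hA _ _ <| .of_image (MulAut.conj_injective hZ) <| by
      rw [← MulAut.mul_conj_mul_inv, ← MulAut.mul_conj_mul_inv]
      exact h.conj ⟨b, hb, rfl⟩
  have : Y⁻¹ * X = 1 := hA.mulAut_eq_one fun b hb => by
    rw [MulAut.mul_apply, hXY b hb, MulAut.inv_apply_self]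
  exact (inv_mul_eq_one.1 this).symm

theorem IsSpecialPair.centralizer_mulAut_conj_image_eq_bot {A : Set K} (hA : IsSpecialPair K A)
    (hZ : center K = ⊥) : centralizer (MulAut.conj '' A) = ⊥ :=
  eq_bot_iff.2 fun X hX => mem_bot.2 <| hA.mulAut_eq_one fun b hb =>
    MulAut.conj_injective hZ <| by
      rw [← MulAut.mul_conj_mul_inv, ← mem_centralizer_iff.1 hX _ ⟨b, hb, rfl⟩,
        mul_inv_cancel_right]

theorem IsSpecialPair.image {A : Set H} (hA : IsSpecialPair H A) {f : H →* K}
    (hf : Bijective f) : IsSpecialPair K (f '' A) := by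
  intro x y h
  obtain ⟨x, rfl⟩ := hf.2 x
  obtain ⟨y, rfl⟩ := hf.2 y
  rw [hA x y (.of_image hf.1 h)]

theorem Subgroup.eq_one_of_map_mem_centralizer_image {A : Set H} (hA : centralizer A = ⊥)
    {f : H →* K} (hf : Injective f) {c : H} (hc : f c ∈ centralizer (f '' A)) : c = 1 := by
  rw [← mem_bot, ← hA]
  exact mem_centralizer_iff.2 fun a ha => hf <| by
    simpa using mem_centralizer_iff.1 hc (f a) ⟨a, ha, rfl⟩

theorem Subgroup.centralizer_image_eq_bot {A : Set H} (hA : centralizer A = ⊥) {f : H →* K}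
    (hf : Bijective f) : centralizer (f '' A) = ⊥ := by
  refine eq_bot_iff.2 fun c hc => ?_
  obtain ⟨c, rfl⟩ := hf.2 c
  rw [eq_one_of_map_mem_centralizer_image hA hf.1 hc, map_one]
  exact one_mem _

end SpecialPair

namespace AutTower

variable {G : Type u} [Group G] (T : AutTower G)

theorem map_embed {o₁ o₂ : Ordinal.{u}} (h : o₁ ≤ o₂) (g : G) :
    T.map h (T.embed o₁ g) = T.embed o₂ g :=
  T.map_comp (zero_le (a := o₁)) h (T.emb0 g)

theorem image_embed {o₁ o₂ : Ordinal.{u}} (h : o₁ ≤ o₂) (A : Set G) :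
    T.embed o₂ '' A = T.map h '' (T.embed o₁ '' A) := by
  rw [Set.image_image]
  exact Set.image_congr fun a _ => (T.map_embed h a).symm

theorem embed_zero_bijective : Bijective (T.embed 0) := by
  have : ⇑(T.embed 0) = T.emb0 := funext fun g => T.map_id 0 (T.emb0 g)
  rw [this]
  exact T.emb0.bijective

theorem succIso_symm_conj (o : Ordinal.{u}) (x : T.Stage o) :
    (T.succIso o).symm (MulAut.conj x) = T.map le_self_add x := by
  rw [MulEquiv.symm_apply_eq, T.succIso_map]

theorem exists_lt_mem_range_map {o : Ordinal.{u}} (ho : Order.IsSuccLimit o) (x y : T.Stage o) :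
    ∃ (o' : Ordinal.{u}) (h : o' < o),
      x ∈ Set.range (T.map h.le) ∧ y ∈ Set.range (T.map h.le) := by
  obtain ⟨o₁, h₁, x, rfl⟩ := T.limit_covers o ho x
  obtain ⟨o₂, h₂, y, rfl⟩ := T.limit_covers o ho y
  refine ⟨max o₁ o₂, max_lt h₁ h₂, ⟨T.map (le_max_left o₁ o₂) x, ?_⟩,
    ⟨T.map (le_max_right o₁ o₂) y, ?_⟩⟩ <;> exact T.map_comp _ _ _

theorem image_embed_succ (o : Ordinal.{u}) (A : Set G) :
    T.embed (o + 1) '' A =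
      (T.succIso o).symm.toMonoidHom '' (MulAut.conj '' (T.embed o '' A)) := by
  rw [T.image_embed le_self_add, Set.image_image, Set.image_image, Set.image_image]
  exact Set.image_congr fun a _ => (T.succIso_symm_conj o _).symm

variable {A : Set G}

theorem isSpecialPair_succ {o : Ordinal.{u}} (hA : IsSpecialPair (T.Stage o) (T.embed o '' A))
    (hZ : center (T.Stage o) = ⊥) : IsSpecialPair (T.Stage (o + 1)) (T.embed (o + 1) '' A) := by
  rw [image_embed_succ]
  exact (hA.mulAut_conj_image hZ).image (T.succIso o).symm.bijective

theorem centralizer_succ_eq_bot {o : Ordinal.{u}}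
    (hA : IsSpecialPair (T.Stage o) (T.embed o '' A)) (hZ : center (T.Stage o) = ⊥) :
    centralizer (T.embed (o + 1) '' A) = ⊥ := by
  rw [image_embed_succ]
  exact centralizer_image_eq_bot (hA.centralizer_mulAut_conj_image_eq_bot hZ)
    (T.succIso o).symm.bijective

theorem isSpecialPair_of_isSuccLimit {o : Ordinal.{u}} (ho : Order.IsSuccLimit o)
    (ih : ∀ o' < o, IsSpecialPair (T.Stage o') (T.embed o' '' A)) :
    IsSpecialPair (T.Stage o) (T.embed o '' A) := by
  intro x y h
  obtain ⟨o', ho', ⟨x, rfl⟩, ⟨y, rfl⟩⟩ := T.exists_lt_mem_range_map ho x y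
  rw [T.image_embed ho'.le] at h
  rw [ih o' ho' x y (.of_image (T.map_injective _) h)]

theorem centralizer_eq_bot_of_isSuccLimit {o : Ordinal.{u}} (ho : Order.IsSuccLimit o)
    (ih : ∀ o' < o, centralizer (T.embed o' '' A) = ⊥) : centralizer (T.embed o '' A) = ⊥ := by
  refine eq_bot_iff.2 fun c hc => ?_
  obtain ⟨o', ho', c, rfl⟩ := T.limit_covers o ho c
  rw [T.image_embed ho'.le] at hc
  rw [eq_one_of_map_mem_centralizer_image (ih o' ho') (T.map_injective _) hc, map_one]
  exact one_mem _

end AutTower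

/-- If `G` is centerless and `(G, A)` is a special pair, then for every ordinal `α`,
`(G^α, A)` is a special pair and the centralizer of `A` in `G^α` is trivial:
`C_{G^α}(A) = {e}` (where `A` is regarded as a subset of `G^α` via the tower
embedding). -/
theorem specialPair_stage_and_centralizer_trivial {G : Type u} [Group G]
    (hG : Subgroup.center G = ⊥) (A : Set G) (hspec : IsSpecialPair G A)
    (T : AutTower G) (α : Ordinal.{u}) :
    IsSpecialPair ↥(T.Stage α) (⇑(T.embed α) '' A) ∧
      Subgroup.centralizer (⇑(T.embed α) '' A) = ⊥ := by
  induction α using Ordinal.limitRecOn with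
  | zero =>
    exact ⟨hspec.image T.embed_zero_bijective,
      centralizer_image_eq_bot (hspec.centralizer_eq_bot hG) T.embed_zero_bijective⟩
  | add_one o ih =>
    have hZ : center (T.Stage o) = ⊥ := le_bot_iff.1 (ih.2 ▸ center_le_centralizer _)
    exact ⟨T.isSpecialPair_succ ih.1 hZ, T.centralizer_succ_eq_bot ih.1 hZ⟩
  | limit o ho ih =>
    exact ⟨T.isSpecialPair_of_isSuccLimit ho fun o' h => (ih o' h).1,
      T.centralizer_eq_bot_of_isSuccLimit ho fun o' h => (ih o' h).2⟩
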